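/- arXiv:2405.04017 — 3 statements merged into one kernel-verified Lean document; each statement's English description precedes it below -/
import Mathlib

section
/- Let θ⁰ ∈ ℝⁿ and ρ > 0. Suppose θ̄ ∈ ℝⁿ satisfies ‖θ̄ − θ⁰‖ ≤ ρ and the variational inequality: for every θ′ with ‖θ′ − θ⁰‖ ≤ ρ, ∫ Δ̂(ω; θ̄) ⟨g(ω), θ′ − θ̄⟩ dμ(ω) ≥ 0. Assume moreover that for every v ∈ ℝⁿ with Σ v = 0 one has ⟨g′(ω), v⟩ = 0 for μ-almost every ω. Then for every θ with ‖θ − θ⁰‖ ≤ ρ there exists θ⋆ ∈ ℝⁿ such that: (i) ‖θ⋆ − θ⁰‖ ≤ 2ρ; (ii) θ − θ⋆ lies in the range of the linear map v ↦ Σ v; and (iii) θ⋆ satisfies the same variational inequality: for every θ′ with ‖θ′ − θ⁰‖ ≤ ρ, ∫ Δ̂(ω; θ⋆) ⟨g(ω), θ′ − θ⋆⟩ dμ(ω) ≥ 0. -/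
/-!
Let `K = ker Σ` and shift `θ̄` by the orthogonal projection of `θ - θ̄` onto `K`:
`θ⋆ = θ̄ + P_K (θ - θ̄)`. Then `θ - θ⋆ = P_{K⊥} (θ - θ̄)`, and `K⊥ = range Σ` because `Σ` is
symmetric. Writing `θ⋆ - θ⁰ = P_{K⊥} (θ̄ - θ⁰) + P_K (θ - θ⁰)` gives `‖θ⋆ - θ⁰‖ ≤ 2ρ`.
For `v ∈ K`, `∫ ⟨g, v⟩² dμ = vᵀ Σ v = 0`, so `⟨g, v⟩ = 0` a.e., and `⟨g′, v⟩ = 0` a.e. by assumption;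
hence the integrand of the variational inequality is unchanged a.e. when `θ̄` is replaced by `θ⋆`.
-/

open MeasureTheory
open scoped RealInnerProductSpace Matrix

theorem Submodule.norm_add_starProjection_sub_sub_le {𝕜 E : Type*} [RCLike 𝕜]
    [NormedAddCommGroup E] [InnerProductSpace 𝕜 E] (K : Submodule 𝕜 E) [K.HasOrthogonalProjection] (x y z : E) :
    ‖x + K.starProjection (y - x) - z‖ ≤ ‖x - z‖ + ‖y - z‖ := by
  have hsplit : x + K.starProjection (y - x) - z =
      Kᗮ.starProjection (x - z) + K.starProjection (y - z) := by
    rw [K.starProjection_orthogonal_val, show y - x = (y - z) - (x - z) by abel, map_sub]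
    abel
  rw [hsplit]
  exact (norm_add_le _ _).trans
    (add_le_add (Kᗮ.norm_starProjection_apply_le _) (K.norm_starProjection_apply_le _))

theorem Submodule.sub_add_starProjection_sub_mem_orthogonal {𝕜 E : Type*} [RCLike 𝕜]
    [NormedAddCommGroup E] [InnerProductSpace 𝕜 E] (K : Submodule 𝕜 E) [K.HasOrthogonalProjection] (x y : E) :
    y - (x + K.starProjection (y - x)) ∈ Kᗮ := by
  rw [← sub_sub]
  exact K.sub_starProjection_mem_orthogonal (y - x)

theorem Matrix.IsHermitian.orthogonal_ker_toEuclideanLin {ι : Type*} [Fintype ι] [DecidableEq ι]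
    {A : Matrix ι ι ℝ} (hA : A.IsHermitian) :
    (LinearMap.ker A.toEuclideanLin)ᗮ = LinearMap.range A.toEuclideanLin := by
  rw [← (isSymmetric_toEuclideanLin_iff.mpr hA).orthogonal_range,
    Submodule.orthogonal_orthogonal]

section SecondMoment

variable {Ω ι : Type*} [MeasurableSpace Ω] {μ : Measure Ω}
  {g : Ω → EuclideanSpace ℝ ι} {M : Matrix ι ι ℝ}

theorem isHermitian_of_eq_integral_mul (hM : ∀ i j, M i j = ∫ ω, g ω i * g ω j ∂μ) :
    M.IsHermitian := by
  ext i j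
  simp only [Matrix.conjTranspose_apply, star_trivial, hM, mul_comm]

theorem integral_inner_sq_eq_dotProduct_mulVec [Fintype ι] (hg : MemLp g 2 μ)
    (hM : ∀ i j, M i j = ∫ ω, g ω i * g ω j ∂μ) (v : EuclideanSpace ℝ ι) :
    ∫ ω, ⟪g ω, v⟫ ^ 2 ∂μ = v ⬝ᵥ (M *ᵥ v) := by
  have hcoord : ∀ i, MemLp (fun ω => g ω i) 2 μ := fun i =>
    (EuclideanSpace.proj (𝕜 := ℝ) i).comp_memLp' hg
  have hint : ∀ i j, Integrable (fun ω => g ω i * g ω j) μ := fun i j =>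
    (hcoord i).integrable_mul (hcoord j)
  have hexpand : ∀ ω, ⟪g ω, v⟫ ^ 2 = ∑ i, ∑ j, v i * v j * (g ω i * g ω j) := by
    intro ω
    simp only [PiLp.inner_apply, RCLike.inner_apply, conj_trivial, sq, Finset.sum_mul_sum]
    exact Finset.sum_congr rfl fun i _ => Finset.sum_congr rfl fun j _ => by ring
  simp only [hexpand, dotProduct, Matrix.mulVec, Finset.mul_sum, hM]
  rw [integral_finsetSum _ fun i _ => integrable_finsetSum _ fun j _ => (hint i j).const_mul _]
  refine Finset.sum_congr rfl fun i _ => ?_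
  rw [integral_finsetSum _ fun j _ => (hint i j).const_mul _]
  refine Finset.sum_congr rfl fun j _ => ?_
  rw [integral_const_mul]
  ring

theorem ae_inner_eq_zero_of_mulVec_eq_zero [Fintype ι] (hg : MemLp g 2 μ)
    (hM : ∀ i j, M i j = ∫ ω, g ω i * g ω j ∂μ) {v : EuclideanSpace ℝ ι} (hv : M *ᵥ v = 0) :
    ∀ᵐ ω ∂μ, ⟪g ω, v⟫ = 0 := by
  have hzero : ∫ ω, ⟪g ω, v⟫ ^ 2 ∂μ = 0 := by
    rw [integral_inner_sq_eq_dotProduct_mulVec hg hM, hv, dotProduct_zero]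
  filter_upwards [(integral_eq_zero_iff_of_nonneg (fun ω => sq_nonneg _)
    (hg.inner_const v).integrable_sq).mp hzero] with ω hω
  exact pow_eq_zero_iff two_ne_zero |>.mp hω

end SecondMoment

theorem integral_linearTDError_mul_inner_add_eq {Ω E : Type*} [MeasurableSpace Ω] {μ : Measure Ω}
    [NormedAddCommGroup E] [InnerProductSpace ℝ E] (g g' : Ω → E) (q q' r : Ω → ℝ) (γ : ℝ)
    {v : E} (hgv : ∀ᵐ ω ∂μ, ⟪g ω, v⟫ = 0) (hg'v : ∀ᵐ ω ∂μ, ⟪g' ω, v⟫ = 0) (θ θ' : E) :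
    ∫ ω, ((q ω + ⟪g ω, θ + v⟫) - r ω - γ * (q' ω + ⟪g' ω, θ + v⟫)) * ⟪g ω, θ' - (θ + v)⟫ ∂μ =
      ∫ ω, ((q ω + ⟪g ω, θ⟫) - r ω - γ * (q' ω + ⟪g' ω, θ⟫)) * ⟪g ω, θ' - θ⟫ ∂μ := by
  refine integral_congr_ae ?_
  filter_upwards [hgv, hg'v] with ω hω hω'
  simp only [inner_add_right, ← sub_sub, inner_sub_right, hω, hω', add_zero, sub_zero]

theorem stmt0_general
    {Ω : Type*} [MeasurableSpace Ω] (μ : Measure Ω)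
    (n : ℕ)
    (g g' : Ω → EuclideanSpace ℝ (Fin n))
    (q q' r : Ω → ℝ)
    (hg : MemLp g 2 μ)
    (γ : ℝ)
    (Δhat : Ω → EuclideanSpace ℝ (Fin n) → ℝ)
    (hΔ : ∀ ω θ, Δhat ω θ =
      (q ω + ⟪g ω, θ⟫) - r ω - γ * (q' ω + ⟪g' ω, θ⟫))
    (M : Matrix (Fin n) (Fin n) ℝ)
    (hM : ∀ i j, M i j = ∫ ω, g ω i * g ω j ∂μ)
    (θ0 θbar : EuclideanSpace ℝ (Fin n)) (ρ : ℝ)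
    (hbar : ‖θbar - θ0‖ ≤ ρ)
    (hVI : ∀ θ' : EuclideanSpace ℝ (Fin n), ‖θ' - θ0‖ ≤ ρ →
      0 ≤ ∫ ω, Δhat ω θbar * ⟪g ω, θ' - θbar⟫ ∂μ)
    (hker : ∀ v : EuclideanSpace ℝ (Fin n), M.mulVec v = 0 →
      ∀ᵐ ω ∂μ, (⟪g' ω, v⟫ = 0)) :
    ∀ θ : EuclideanSpace ℝ (Fin n), ‖θ - θ0‖ ≤ ρ →
      ∃ θstar : EuclideanSpace ℝ (Fin n),
        ‖θstar - θ0‖ ≤ 2 * ρ ∧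
        (∃ w : EuclideanSpace ℝ (Fin n), M.mulVec w = θ - θstar) ∧
        (∀ θ' : EuclideanSpace ℝ (Fin n), ‖θ' - θ0‖ ≤ ρ →
          0 ≤ ∫ ω, Δhat ω θstar * ⟪g ω, θ' - θstar⟫ ∂μ) := by
  intro θ hθ
  set K := LinearMap.ker M.toEuclideanLin
  set v := K.starProjection (θ - θbar)
  have hMv : M *ᵥ v = 0 := congrArg WithLp.ofLp (K.starProjection_apply_mem (θ - θbar))
  refine ⟨θbar + v, ?_, ?_, fun θ' hθ' => ?_⟩
  · calc ‖θbar + v - θ0‖ ≤ ‖θbar - θ0‖ + ‖θ - θ0‖ := K.norm_add_starProjection_sub_sub_le _ _ _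
      _ ≤ 2 * ρ := by linarith
  · have hperp := K.sub_add_starProjection_sub_mem_orthogonal θbar θ
    rw [(isHermitian_of_eq_integral_mul hM).orthogonal_ker_toEuclideanLin] at hperp
    obtain ⟨w, hw⟩ := hperp
    exact ⟨w, congrArg WithLp.ofLp hw⟩
  · simp only [hΔ] at hVI ⊢
    rw [integral_linearTDError_mul_inner_add_eq g g' q q' r γ
      (ae_inner_eq_zero_of_mulVec_eq_zero hg hM hMv) (hker v hMv)]
    exact hVI θ' hθ'

/-- Proposition 1 of the paper (abstract form): given a point `θ̄` satisfying the
variational inequality characterizing fixed points of the projected Bellman operator,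
every `θ` in the ball admits a shifted stationary point `θ⋆` within radius `2ρ` such
that `θ − θ⋆` lies in the range of the feature covariance matrix and `θ⋆` satisfies
the same variational inequality. -/
theorem stmt0
    {Ω : Type*} [MeasurableSpace Ω] (μ : Measure Ω) [IsProbabilityMeasure μ]
    (n : ℕ) (hn : 0 < n)
    (g g' : Ω → EuclideanSpace ℝ (Fin n))
    (q q' r : Ω → ℝ)
    (hg : MemLp g 2 μ) (hg' : MemLp g' 2 μ)
    (hq : MemLp q 2 μ) (hq' : MemLp q' 2 μ) (hr : MemLp r 2 μ)
    (γ : ℝ) (hγ0 : 0 ≤ γ) (hγ1 : γ < 1)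
    (Δhat : Ω → EuclideanSpace ℝ (Fin n) → ℝ)
    (hΔ : ∀ ω θ, Δhat ω θ =
      (q ω + ⟪g ω, θ⟫) - r ω - γ * (q' ω + ⟪g' ω, θ⟫))
    (M : Matrix (Fin n) (Fin n) ℝ)
    (hM : ∀ i j, M i j = ∫ ω, g ω i * g ω j ∂μ)
    (θ0 θbar : EuclideanSpace ℝ (Fin n)) (ρ : ℝ) (hρ : 0 < ρ)
    (hbar : ‖θbar - θ0‖ ≤ ρ)
    (hVI : ∀ θ' : EuclideanSpace ℝ (Fin n), ‖θ' - θ0‖ ≤ ρ →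
      0 ≤ ∫ ω, Δhat ω θbar * ⟪g ω, θ' - θbar⟫ ∂μ)
    (hker : ∀ v : EuclideanSpace ℝ (Fin n), M.mulVec v = 0 →
      ∀ᵐ ω ∂μ, (⟪g' ω, v⟫ = 0)) :
    ∀ θ : EuclideanSpace ℝ (Fin n), ‖θ - θ0‖ ≤ ρ →
      ∃ θstar : EuclideanSpace ℝ (Fin n),
        ‖θstar - θ0‖ ≤ 2 * ρ ∧
        (∃ w : EuclideanSpace ℝ (Fin n), M.mulVec w = θ - θstar) ∧
        (∀ θ' : EuclideanSpace ℝ (Fin n), ‖θ' - θ0‖ ≤ ρ →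
          0 ≤ ∫ ω, Δhat ω θstar * ⟪g ω, θ' - θstar⟫ ∂μ) :=
  stmt0_general μ n g g' q q' r hg γ Δhat hΔ M hM θ0 θbar ρ hbar hVI hker
end

section
/- Let κ be a Markov kernel on a measurable space X and let μ be a probability measure on X that is invariant under κ (i.e., the measure obtained by first sampling x ∼ μ and then y ∼ κ(x) has law μ). Let γ ∈ [0,1), let r : X → ℝ be measurable, and for square-integrable measurable f : X → ℝ define (T f)(x) = r(x) + γ ∫ f(y) dκ(x)(y). Then for all square-integrable measurable f, h : X → ℝ with f − h square-integrable, ∫ (T f(x) − T h(x))² dμ(x) ≤ γ² ∫ (f(x) − h(x))² dμ(x). -/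
/-!
Writing `P g x = ∫ g dκ(x)`, the reward cancels and `T f - T h = γ • P (f - h)`. By Jensen,
`(P g x)² ≤ ∫ g² dκ(x)`, and integrating against `μ` turns the right-hand side into
`∫ g² d(κ ∘ₘ μ) = ∫ g² dμ` by invariance, so `P` is a contraction of `L²(μ)`.
-/

open MeasureTheory ProbabilityTheory
open scoped ENNReal NNReal

namespace MeasureTheory

variable {α β : Type*} [MeasurableSpace α] [MeasurableSpace β] {μ : Measure α} {ν : Measure β}

lemma integral_sq_eq_toReal_eLpNorm_sq {f : α → ℝ} (hf : AEStronglyMeasurable f μ) :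
    ∫ x, f x ^ 2 ∂μ = (eLpNorm f 2 μ ^ 2).toReal := by
  have h := eLpNorm_nnreal_pow_eq_lintegral (f := f) (μ := μ) (p := 2) two_ne_zero
  simp only [NNReal.coe_ofNat, ENNReal.coe_ofNat, ENNReal.rpow_two] at h
  rw [h, integral_eq_lintegral_of_nonneg_ae (.of_forall fun x ↦ sq_nonneg (f x)) (hf.pow 2)]
  congr 1
  refine lintegral_congr fun x ↦ ?_
  rw [← sq_abs, ENNReal.ofReal_pow (abs_nonneg _), Real.enorm_eq_ofReal_abs]

lemma integral_sq_le_integral_sq_of_eLpNorm_le {f : α → ℝ} {g : β → ℝ}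
    (hf : AEStronglyMeasurable f μ) (hg : MemLp g 2 ν) (hfg : eLpNorm f 2 μ ≤ eLpNorm g 2 ν) :
    ∫ x, f x ^ 2 ∂μ ≤ ∫ y, g y ^ 2 ∂ν := by
  rw [integral_sq_eq_toReal_eLpNorm_sq hf, integral_sq_eq_toReal_eLpNorm_sq hg.1]
  exact ENNReal.toReal_mono (ENNReal.pow_ne_top hg.eLpNorm_ne_top) (by gcongr)

lemma enorm_integral_le_eLpNorm {E : Type*} [NormedAddCommGroup E] [NormedSpace ℝ E]
    [IsProbabilityMeasure ν] {g : β → E} {p : ℝ≥0∞} (hp : 1 ≤ p) (hg : AEStronglyMeasurable g ν) :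
    ‖∫ y, g y ∂ν‖ₑ ≤ eLpNorm g p ν :=
  calc ‖∫ y, g y ∂ν‖ₑ ≤ ∫⁻ y, ‖g y‖ₑ ∂ν := enorm_integral_le_lintegral_enorm g
    _ = eLpNorm g 1 ν := eLpNorm_one_eq_lintegral_enorm.symm
    _ ≤ eLpNorm g p ν := eLpNorm_le_eLpNorm_of_exponent_le hp hg

end MeasureTheory

namespace ProbabilityTheory

variable {X Y E : Type*} [MeasurableSpace X] [MeasurableSpace Y]
  [NormedAddCommGroup E] {κ : Kernel X Y} {μ : Measure X} {g : Y → E}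

lemma _root_.MeasureTheory.AEStronglyMeasurable.ae_of_measure_comp
    (hg : AEStronglyMeasurable g (κ ∘ₘ μ)) : ∀ᵐ x ∂μ, AEStronglyMeasurable g (κ x) := by
  filter_upwards [Measure.ae_ae_of_ae_comp hg.ae_eq_mk] with x hx
  exact ⟨hg.mk g, hg.stronglyMeasurable_mk, hx⟩

lemma _root_.MeasureTheory.AEStronglyMeasurable.integral_kernel_measure_comp [NormedSpace ℝ E]
    (hg : AEStronglyMeasurable g (κ ∘ₘ μ)) :
    AEStronglyMeasurable (fun x ↦ ∫ y, g y ∂κ x) μ :=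
  ⟨fun x ↦ ∫ y, hg.mk g y ∂κ x, hg.stronglyMeasurable_mk.integral_kernel, by
    filter_upwards [Measure.ae_ae_of_ae_comp hg.ae_eq_mk] with x hx using integral_congr_ae hx⟩

lemma _root_.MeasureTheory.MemLp.ae_of_measure_comp {p : ℝ≥0∞} (hp₀ : p ≠ 0) (hp : p ≠ ∞)
    (hg : MemLp g p (κ ∘ₘ μ)) : ∀ᵐ x ∂μ, MemLp g p (κ x) := by
  have hint := (integrable_norm_rpow_iff hg.1 hp₀ hp).2 hg
  filter_upwards [hg.1.ae_of_measure_comp, ((Measure.integrable_comp_iff hint.1).1 hint).1]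
    with x hgx hx
  exact (integrable_norm_rpow_iff hgx hp₀ hp).1 hx

lemma eLpNorm_integral_kernel_le [NormedSpace ℝ E] [IsMarkovKernel κ] {p : ℝ≥0} (hp : 1 ≤ p)
    (hg : AEStronglyMeasurable g (κ ∘ₘ μ)) :
    eLpNorm (fun x ↦ ∫ y, g y ∂κ x) p μ ≤ eLpNorm g p (κ ∘ₘ μ) := by
  have hp₀ : p ≠ 0 := (zero_lt_one.trans_le hp).ne'
  rw [← ENNReal.rpow_le_rpow_iff (NNReal.coe_pos.2 (pos_iff_ne_zero.2 hp₀)),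
    eLpNorm_nnreal_pow_eq_lintegral hp₀, eLpNorm_nnreal_pow_eq_lintegral hp₀,
    Measure.lintegral_bind κ.aemeasurable (hg.enorm.pow_const _)]
  refine lintegral_mono_ae ?_
  filter_upwards [hg.ae_of_measure_comp] with x hgx
  rw [← eLpNorm_nnreal_pow_eq_lintegral hp₀]
  gcongr
  exact enorm_integral_le_eLpNorm (by exact_mod_cast hp) hgx

lemma integral_sq_integral_kernel_le [IsMarkovKernel κ] {g : Y → ℝ} (hg : MemLp g 2 (κ ∘ₘ μ)) :
    ∫ x, (∫ y, g y ∂κ x) ^ 2 ∂μ ≤ ∫ y, g y ^ 2 ∂(κ ∘ₘ μ) :=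
  integral_sq_le_integral_sq_of_eLpNorm_le hg.1.integral_kernel_measure_comp hg <| by
    exact_mod_cast eLpNorm_integral_kernel_le (p := 2) one_le_two hg.1

end ProbabilityTheory

theorem stmt9_general
    {X : Type*} [MeasurableSpace X]
    (κ : Kernel X X) [IsMarkovKernel κ]
    (μ : Measure X)
    (hinv : μ.bind (fun x => κ x) = μ)
    (γ : ℝ)
    (r : X → ℝ) :
    ∀ f h : X → ℝ, Measurable f → Measurable h →
      MemLp f 2 μ → MemLp h 2 μ → MemLp (f - h) 2 μ →
      ∫ x, ((r x + γ * ∫ y, f y ∂(κ x)) - (r x + γ * ∫ y, h y ∂(κ x))) ^ 2 ∂μ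
        ≤ γ ^ 2 * ∫ x, (f x - h x) ^ 2 ∂μ := by
  intro f h _ _ hf hh _
  rw [← hinv] at hf hh
  have hbellman : ∀ᵐ x ∂μ,
      ((r x + γ * ∫ y, f y ∂(κ x)) - (r x + γ * ∫ y, h y ∂(κ x))) ^ 2
        = γ ^ 2 * (∫ y, (f - h) y ∂(κ x)) ^ 2 := by
    filter_upwards [hf.ae_of_measure_comp two_ne_zero ENNReal.ofNat_ne_top,
      hh.ae_of_measure_comp two_ne_zero ENNReal.ofNat_ne_top] with x hfx hhx
    rw [Pi.sub_def, integral_sub (hfx.integrable one_le_two) (hhx.integrable one_le_two)]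
    ring
  calc _ = γ ^ 2 * ∫ x, (∫ y, (f - h) y ∂(κ x)) ^ 2 ∂μ := by
        rw [integral_congr_ae hbellman, integral_const_mul]
    _ ≤ γ ^ 2 * ∫ x, (f - h) x ^ 2 ∂(κ ∘ₘ μ) := by
        gcongr
        exact integral_sq_integral_kernel_le (hf.sub hh)
    _ = γ ^ 2 * ∫ x, (f x - h x) ^ 2 ∂μ := by
        rw [hinv]
        rfl

/-- γ-contraction of the Bellman operator in the L²(μ) norm under the stationary
distribution (eq. (contraction) inside Lemma 2 of the paper). -/
theorem stmt9
    {X : Type*} [MeasurableSpace X]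
    (κ : Kernel X X) [IsMarkovKernel κ]
    (μ : Measure X) [IsProbabilityMeasure μ]
    (hinv : μ.bind (fun x => κ x) = μ)
    (γ : ℝ) (hγ0 : 0 ≤ γ) (hγ1 : γ < 1)
    (r : X → ℝ) (hr : Measurable r) :
    ∀ f h : X → ℝ, Measurable f → Measurable h →
      MemLp f 2 μ → MemLp h 2 μ → MemLp (f - h) 2 μ →
      ∫ x, ((r x + γ * ∫ y, f y ∂(κ x)) - (r x + γ * ∫ y, h y ∂(κ x))) ^ 2 ∂μ
        ≤ γ ^ 2 * ∫ x, (f x - h x) ^ 2 ∂μ :=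
  stmt9_general κ μ hinv γ r
end

section
/- Let c > 0, let τ ∈ ℕ, let A, B, D ≥ 0, let T ≥ 1 be a natural number, and let e : ℕ → ℝ be a sequence with e(t) ≥ 0 for all t. Set η(t) = 1/(2c(t+1)) for t ∈ ℕ. Suppose that for every t with 0 ≤ t ≤ T−1, e(t+1) ≤ (1 − 2c·η(t))·e(t) + A·η(t)² + B·η(t) + D·η(t)·η(max(t−τ, 0)). Then e(T) ≤ A(1 + log T)/(4c²T) + B/(2c) + D(τ + 1 + log T)/(4c²T). -/
/-!
Multiplying the recursion by `t + 1` cancels the contraction factor exactly, since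
`(t + 1) (1 - 2cη(t)) = t`; so `t ↦ t e(t)` grows by at most
`A/(4c²(t+1)) + B/(2c) + D/(4c²(t-τ+1))` per step. Summing, `T e(T)` is bounded
by a harmonic sum, a linear term and a delayed harmonic sum; the harmonic sum is at most
`1 + log T`, and the delayed one exceeds it by at most `τ`, since its terms are those of
the harmonic sum preceded by `τ` ones.
-/

open Finset Real

theorem le_add_sum_of_succ_le {a b : ℕ → ℝ} {T : ℕ} (h : ∀ t < T, a (t + 1) ≤ a t + b t) :
    a T ≤ a 0 + ∑ t ∈ range T, b t := by
  induction T with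
  | zero => simp
  | succ T ih =>
    rw [sum_range_succ]
    linarith [ih fun t ht => h t (by omega), h T (by omega)]

theorem harmonic_cast_eq_sum (n : ℕ) :
    (harmonic n : ℝ) = ∑ i ∈ range n, ((i : ℝ) + 1)⁻¹ := by
  simp [harmonic]

theorem sum_range_inv_tsub_add_one_le (τ T : ℕ) :
    ∑ t ∈ range T, (((t - τ : ℕ) : ℝ) + 1)⁻¹ ≤ τ + harmonic T := by
  set f : ℕ → ℝ := fun t => (((t - τ : ℕ) : ℝ) + 1)⁻¹
  calc ∑ t ∈ range T, f t
      ≤ ∑ t ∈ range (τ + T), f t :=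
        sum_le_sum_of_subset_of_nonneg (range_subset_range.mpr (by omega))
          fun _ _ _ => by positivity
    _ = ∑ t ∈ range τ, f t + ∑ k ∈ range T, f (τ + k) := sum_range_add f τ T
    _ = τ + harmonic T := by
        have h_head : ∀ t ∈ range τ, f t = 1 := fun t ht => by
          simp [f, Nat.sub_eq_zero_of_le (mem_range.mp ht).le]
        have h_tail : ∀ k ∈ range T, f (τ + k) = ((k : ℝ) + 1)⁻¹ := fun k _ => by
          simp [f]
        rw [sum_congr rfl h_head, sum_congr rfl h_tail, harmonic_cast_eq_sum]
        simp

theorem succ_mul_recursion_rhs_eq {c : ℝ} (hc : c ≠ 0) (t s : ℕ) (A B D x : ℝ) :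
    ((t : ℝ) + 1) * ((1 - 2 * c * (1 / (2 * c * ((t : ℝ) + 1)))) * x
        + A * (1 / (2 * c * ((t : ℝ) + 1))) ^ 2 + B * (1 / (2 * c * ((t : ℝ) + 1)))
        + D * (1 / (2 * c * ((t : ℝ) + 1))) * (1 / (2 * c * ((s : ℝ) + 1))))
      = t * x + A / (4 * c ^ 2) * ((t : ℝ) + 1)⁻¹ + B / (2 * c)
        + D / (4 * c ^ 2) * ((s : ℝ) + 1)⁻¹ := by
  field_simp
  ring

theorem stmt11_general
    (c : ℝ) (hc : 0 < c) (τ : ℕ) (A B D : ℝ)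
    (hA : 0 ≤ A) (hD : 0 ≤ D)
    (T : ℕ) (hT : 1 ≤ T)
    (e : ℕ → ℝ)
    (η : ℕ → ℝ) (hη : ∀ t : ℕ, η t = 1 / (2 * c * ((t : ℝ) + 1)))
    (hrec : ∀ t : ℕ, t < T →
      e (t + 1) ≤ (1 - 2 * c * η t) * e t + A * η t ^ 2 + B * η t + D * η t * η (t - τ)) :
    e T ≤ A * (1 + Real.log T) / (4 * c ^ 2 * T) + B / (2 * c)
      + D * ((τ : ℝ) + 1 + Real.log T) / (4 * c ^ 2 * T) := by
  have hstep : ∀ t < T, ((t + 1 : ℕ) : ℝ) * e (t + 1) ≤ t * e t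
      + (A / (4 * c ^ 2) * ((t : ℝ) + 1)⁻¹ + B / (2 * c)
        + D / (4 * c ^ 2) * (((t - τ : ℕ) : ℝ) + 1)⁻¹) := fun t ht => by
    have h := mul_le_mul_of_nonneg_left (hrec t ht) (by positivity : (0 : ℝ) ≤ t + 1)
    rw [hη, hη, succ_mul_recursion_rhs_eq hc.ne'] at h
    push_cast
    linarith
  have htel := le_add_sum_of_succ_le (a := fun t => (t : ℝ) * e t) hstep
  simp only [sum_add_distrib, ← mul_sum, sum_const, card_range, nsmul_eq_mul,
    ← harmonic_cast_eq_sum, Nat.cast_zero, zero_mul, zero_add] at htel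
  have hmain : (T : ℝ) * e T ≤ A / (4 * c ^ 2) * (1 + log T) + T * (B / (2 * c))
      + D / (4 * c ^ 2) * (τ + 1 + log T) := by
    have hH := harmonic_le_one_add_log T
    have hG := sum_range_inv_tsub_add_one_le τ T
    refine htel.trans ?_
    gcongr
    linarith
  have hT0 : (0 : ℝ) < T := by exact_mod_cast hT
  calc e T = T * e T / T := by field_simp
    _ ≤ (A / (4 * c ^ 2) * (1 + log T) + T * (B / (2 * c))
          + D / (4 * c ^ 2) * (τ + 1 + log T)) / T := by gcongr
    _ = _ := by field_simp

/-- Deterministic recursion lemma encapsulating the convergence-rate computation in the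
proof of Theorem 1 of the paper, with step sizes `η t = 1/(2c(t+1))`. -/
theorem stmt11
    (c : ℝ) (hc : 0 < c) (τ : ℕ) (A B D : ℝ)
    (hA : 0 ≤ A) (hB : 0 ≤ B) (hD : 0 ≤ D)
    (T : ℕ) (hT : 1 ≤ T)
    (e : ℕ → ℝ) (he : ∀ t, 0 ≤ e t)
    (η : ℕ → ℝ) (hη : ∀ t : ℕ, η t = 1 / (2 * c * ((t : ℝ) + 1)))
    (hrec : ∀ t : ℕ, t < T →
      e (t + 1) ≤ (1 - 2 * c * η t) * e t + A * η t ^ 2 + B * η t + D * η t * η (t - τ)) :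
    e T ≤ A * (1 + Real.log T) / (4 * c ^ 2 * T) + B / (2 * c)
      + D * ((τ : ℝ) + 1 + Real.log T) / (4 * c ^ 2 * T) :=
  stmt11_general c hc τ A B D hA hD T hT e η hη hrec
end
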